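/- arXiv:1609.01969 — 2 statements merged into one kernel-verified Lean document; each statement's English description precedes it below -/
import Mathlib

section
/- Let G be a finite group and let K be a subgroup of G. Then K is a sol-component of G if and only if K is subnormal in G, K is perfect, and the quotient K/Sol(K) is a simple group. -/
open Pointwise

/-- A subgroup `H` of `G` is *subnormal* if there is a finite chain
`H = c 0 ⊴ c 1 ⊴ ⋯ ⊴ c n = G` with each term normal in the next. -/
def IsSubnormal {G : Type*} [Group G] (H : Subgroup G) : Prop :=
  ∃ (n : ℕ) (c : ℕ → Subgroup G), c 0 = H ∧ c n = ⊤ ∧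
    ∀ i < n, c i ≤ c (i + 1) ∧ ((c i).subgroupOf (c (i + 1))).Normal

/-- A group is *quasisimple* if it is perfect and its quotient by its center is simple. -/
def IsQuasisimpleGroup (Q : Type*) [Group Q] : Prop :=
  commutator Q = ⊤ ∧ IsSimpleGroup (Q ⧸ Subgroup.center Q)

/-- A *component* of `G` is a quasisimple subnormal subgroup. -/
def IsComponent {G : Type*} [Group G] (K : Subgroup G) : Prop :=
  IsSubnormal K ∧ IsQuasisimpleGroup ↥K

/-- The *layer* `E(G)`: the subgroup generated by all components of `G`. -/
def layer (G : Type*) [Group G] : Subgroup G :=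
  sSup {K : Subgroup G | IsComponent K}

/-- `Sol(G)`: the join of all solvable normal subgroups of `G`. -/
def solRadical (G : Type*) [Group G] : Subgroup G :=
  sSup {N : Subgroup G | N.Normal ∧ IsSolvable ↥N}

instance solRadical_normal (G : Type*) [Group G] : (solRadical G).Normal := by
  constructor
  intro n hn g
  have h : solRadical G ≤ (solRadical G).comap (MulAut.conj g).toMonoidHom := by
    apply sSup_le
    intro N hN x hx
    have hmem : g * x * g⁻¹ ∈ N := hN.1.conj_mem x hx g
    exact Subgroup.mem_comap.mpr
      (le_sSup hN (by simpa [MulAut.conj_apply] using hmem))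
  simpa [MulAut.conj_apply] using h hn

/-- A *sol-component* of `G` is a perfect subnormal subgroup of `G` whose image in
`G/Sol(G)` is a component of `G/Sol(G)`. -/
def IsSolComponent {G : Type*} [Group G] (K : Subgroup G) : Prop :=
  IsSubnormal K ∧ commutator ↥K = ⊤ ∧
    IsComponent (K.map (QuotientGroup.mk' (solRadical G)))

/-- `E_sol(G)`: the subgroup generated by all sol-components of `G`. -/
def solLayer (G : Type*) [Group G] : Subgroup G :=
  sSup {K : Subgroup G | IsSolComponent K}


/-! Because `Sol` is characteristic, `Sol(H)` is normal in `K` whenever `H ⊴ K`; walking up a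
subnormal series shows `Sol(K) ≤ Sol(G)` for every subnormal `K`, hence `Sol(K) = K ∩ Sol(G)` and
`K ⧸ Sol(K)` is isomorphic to the image `K̄` of `K` in `G ⧸ Sol(G)`. Since `Sol(G ⧸ Sol(G)) = 1`,
the center of every subnormal subgroup of `G ⧸ Sol(G)`, being solvable and subnormal, is trivial.
So `K̄` is quasisimple iff it is perfect and simple, and it is perfect as soon as `K` is. -/

section SolvableRadical

variable {G : Type*} [Group G]

theorem Subgroup.isSolvable_sup (N M : Subgroup G) [M.Normal] [Group.IsSolvable N]
    [Group.IsSolvable M] : Group.IsSolvable ↥(N ⊔ M) := by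
  let e := Subgroup.subgroupOfEquivOfLe (le_sup_right : M ≤ N ⊔ M)
  have : Group.IsSolvable (M.subgroupOf (N ⊔ M)) :=
    Group.isSolvable_of_isSolvable_injective (f := e.toMonoidHom) e.injective
  let e' := QuotientGroup.quotientInfEquivProdNormalQuotient N M
  have : Group.IsSolvable (↥(N ⊔ M) ⧸ M.subgroupOf (N ⊔ M)) :=
    Group.isSolvable_of_surjective (f := e'.toMonoidHom) e'.surjective
  exact (Group.isSolvable_iff_subgroup_quotient _).2 ⟨‹_›, ‹_›⟩

theorem Subgroup.isSolvable_comap {Q : Type*} [Group Q] (f : G →* Q) (N : Subgroup Q)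
    [Group.IsSolvable f.ker] [Group.IsSolvable N] : Group.IsSolvable (N.comap f) :=
  Group.isSolvable_of_ker_le_range (Subgroup.inclusion (Subgroup.ker_le_comap f N))
    (f.subgroupComap N) fun x hx => ⟨⟨x, congrArg Subtype.val hx⟩, rfl⟩

theorem le_solRadical {N : Subgroup G} (hN : N.Normal) [Group.IsSolvable N] :
    N ≤ solRadical G :=
  le_sSup ⟨hN, ‹_›⟩

instance isSolvable_solRadical [Finite G] : Group.IsSolvable (solRadical G) := by
  have : solRadical G ∈ {N : Subgroup G | N.Normal ∧ Group.IsSolvable N} := by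
    refine SupClosed.sSup_mem ?_ (Set.toFinite _) ⟨inferInstance, inferInstance⟩ subset_rfl
    rintro N ⟨hN, hNsol⟩ M ⟨hM, hMsol⟩
    exact ⟨inferInstance, Subgroup.isSolvable_sup N M⟩
  exact this.2

theorem map_solRadical_le_of_surjective {H : Type*} [Group H] [Finite G] {f : G →* H}
    (hf : Function.Surjective f) : (solRadical G).map f ≤ solRadical H :=
  have := Group.isSolvable_of_surjective (f.subgroupMap_surjective (solRadical G))
  le_solRadical ((solRadical_normal G).map f hf)

instance solRadical_characteristic [Finite G] : (solRadical G).Characteristic :=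
  Subgroup.characteristic_iff_map_le.2 fun e => map_solRadical_le_of_surjective e.surjective

theorem solRadical_quotient_solRadical_eq_bot [Finite G] :
    solRadical (G ⧸ solRadical G) = ⊥ := by
  refine le_bot_iff.1 (sSup_le ?_)
  rintro N ⟨hN, hNsol : Group.IsSolvable N⟩
  let π := QuotientGroup.mk' (solRadical G)
  have : Group.IsSolvable π.ker := by rw [QuotientGroup.ker_mk']; infer_instance
  have : Group.IsSolvable (N.comap π) := Subgroup.isSolvable_comap π N
  calc N = (N.comap π).map π :=
        (Subgroup.map_comap_eq_self_of_surjective (QuotientGroup.mk'_surjective _) N).symm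
    _ ≤ (solRadical G).map π := Subgroup.map_mono (le_solRadical (hN.comap π))
    _ = ⊥ := QuotientGroup.map_mk'_self _

end SolvableRadical

section Subnormal

variable {G : Type*} [Group G]

theorem isSubnormal_iff_subgroup_isSubnormal {H : Subgroup G} :
    IsSubnormal H ↔ H.IsSubnormal := by
  constructor
  · rintro ⟨n, c, rfl, hn, hc⟩
    induction n generalizing c with
    | zero => exact hn ▸ Subgroup.IsSubnormal.top
    | succ n ih =>
      have hc1 := ih (fun i => c (i + 1)) hn fun i hi => hc (i + 1) (by omega)
      exact .step _ _ (hc 0 n.succ_pos).1 hc1 (hc 0 n.succ_pos).2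
  · intro hH
    obtain ⟨n, c, hmono, hnormal, h0, hn⟩ := hH.exists_chain
    exact ⟨n, c, h0, hn, fun i _ => ⟨hmono i.le_succ, hnormal i⟩⟩

theorem map_solRadical_le_of_normal [Finite G] (N : Subgroup G) [N.Normal] :
    (solRadical N).map N.subtype ≤ solRadical G :=
  have := Group.isSolvable_of_surjective (N.subtype.subgroupMap_surjective (solRadical N))
  le_solRadical inferInstance

theorem map_solRadical_le_of_subgroupOf_normal [Finite G] {H K : Subgroup G} (hle : H ≤ K)
    [(H.subgroupOf K).Normal] : (solRadical H).map H.subtype ≤ (solRadical K).map K.subtype := by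
  let e := (Subgroup.subgroupOfEquivOfLe hle).symm
  have hsub : H.subtype = K.subtype.comp ((H.subgroupOf K).subtype.comp e.toMonoidHom) := rfl
  rw [hsub, ← Subgroup.map_map, ← Subgroup.map_map]
  exact Subgroup.map_mono <|
    (Subgroup.map_mono (map_solRadical_le_of_surjective e.surjective)).trans
      (map_solRadical_le_of_normal _)

theorem Subgroup.IsSubnormal.map_solRadical_le [Finite G] {H : Subgroup G} (hH : H.IsSubnormal) :
    (solRadical H).map H.subtype ≤ solRadical G := by
  induction hH with
  | top => exact map_solRadical_le_of_normal ⊤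
  | step H K hle _ hnormal ih => exact (map_solRadical_le_of_subgroupOf_normal hle).trans ih

variable [Finite G] {H : Subgroup G}

theorem Subgroup.IsSubnormal.solRadical_subgroupOf (hH : H.IsSubnormal) :
    (solRadical G).subgroupOf H = solRadical H := by
  refine le_antisymm ?_ (Subgroup.map_le_iff_le_comap.1 hH.map_solRadical_le)
  have : Group.IsSolvable ((solRadical G).subgroupOf H) :=
    Group.isSolvable_of_isSolvable_injective (f := H.subtype.subgroupComap (solRadical G))
      fun _ _ hxy => Subtype.ext (Subtype.ext (congrArg Subtype.val hxy :))
  exact le_solRadical Subgroup.normal_subgroupOf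

theorem Subgroup.IsSubnormal.center_eq_bot (hH : H.IsSubnormal) (hG : solRadical G = ⊥) :
    Subgroup.center H = ⊥ := by
  have hcenter : Subgroup.center H ≤ solRadical H :=
    have := Group.isSolvable_of_comm fun a b : Subgroup.center H =>
      Subtype.ext (Subgroup.mem_center_iff.1 b.2 a)
    le_solRadical inferInstance
  rw [← Subgroup.map_eq_bot_iff_of_injective _ H.subtype_injective, ← le_bot_iff, ← hG]
  exact (Subgroup.map_mono hcenter).trans hH.map_solRadical_le

noncomputable def Subgroup.IsSubnormal.quotientSolRadicalEquivMap (hH : H.IsSubnormal) :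
    H ⧸ solRadical H ≃* H.map (QuotientGroup.mk' (solRadical G)) :=
  (QuotientGroup.quotientMulEquivOfEq (by
      rw [Subgroup.ker_subgroupMap, QuotientGroup.ker_mk', hH.solRadical_subgroupOf])).trans
    (QuotientGroup.quotientKerEquivOfSurjective _ (MonoidHom.subgroupMap_surjective _ H))

end Subnormal

theorem commutator_eq_top_of_surjective {G Q : Type*} [Group G] [Group Q] {f : G →* Q}
    (hf : Function.Surjective f) (hG : commutator G = ⊤) : commutator Q = ⊤ := by
  rw [commutator_def] at hG ⊢
  rw [← Subgroup.map_top_of_surjective f hf, ← Subgroup.map_commutator, hG]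

theorem isQuasisimpleGroup_iff_of_center_eq_bot {Q : Type*} [Group Q]
    (h : Subgroup.center Q = ⊥) : IsQuasisimpleGroup Q ↔ commutator Q = ⊤ ∧ IsSimpleGroup Q :=
  and_congr_right fun _ =>
    ((QuotientGroup.quotientMulEquivOfEq h).trans QuotientGroup.quotientBot).isSimpleGroup_congr

/-- `K` is a sol-component of `G` iff `K` is subnormal in `G`,
perfect, and `K/Sol(K)` is simple. -/
theorem solComponent_iff_subnormal_perfect_quotient_simple
    {G : Type*} [Group G] [Finite G] (K : Subgroup G) :
    IsSolComponent K ↔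
      IsSubnormal K ∧ commutator ↥K = ⊤ ∧ IsSimpleGroup (↥K ⧸ solRadical ↥K) := by
  have hπ := QuotientGroup.mk'_surjective (solRadical G)
  simp only [IsSolComponent, IsComponent, isSubnormal_iff_subgroup_isSubnormal]
  refine and_congr_right fun hK => and_congr_right fun hperf => ?_
  have hKπ := hK.map hπ
  rw [isQuasisimpleGroup_iff_of_center_eq_bot
      (hKπ.center_eq_bot solRadical_quotient_solRadical_eq_bot),
    hK.quotientSolRadicalEquivMap.isSimpleGroup_congr]
  exact ⟨fun h => h.2.2, fun h => ⟨hKπ,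
    commutator_eq_top_of_surjective ((QuotientGroup.mk' _).subgroupMap_surjective K) hperf, h⟩⟩
end

section
/- Let G = K₁ × ⋯ × K_n be a direct product of nonabelian simple groups K₁, …, K_n with projections π_i : G → K_i, and let H be an overdiagonal subgroup of G. Then H is self-normalizing in G: N_G(H) = H. -/
/-!
Let `g` normalize `H`. We find elements of `H` agreeing with `g` on more and more coordinates.
If `h ∈ H` agrees with `g` on a set `S`, then `u = g h⁻¹` normalizes `H` and is trivial on `S`.
For a new coordinate `j`, the `j`-th projection of the elements of `H` that are trivial on `S`
is normal in `π_j(H) = K_j`, so it is trivial or all of `K_j`. If it is all of `K_j`, some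
element of `H` trivial on `S` has `j`-th coordinate `u j`. If it is trivial, the commutators
`[u, h]` with `h ∈ H` lie in `H` and are trivial on `S`, so `u j` commutes with `π_j(H) = K_j`
and is therefore `1`, since `K_j` has trivial centre.
-/

namespace Subgroup

instance pi_normal {ι : Type*} {f : ι → Type*} [∀ i, Group (f i)] (I : Set ι)
    (N : ∀ i, Subgroup (f i)) [∀ i, (N i).Normal] : (pi I N).Normal where
  conj_mem _ hn g i hi := (inferInstance : (N i).Normal).conj_mem _ (hn i hi) (g i)

theorem normal_map_inf_of_map_eq_top {G K : Type*} [Group G] [Group K] (f : G →* K)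
    {H N : Subgroup G} [hN : N.Normal] (hH : H.map f = ⊤) : ((H ⊓ N).map f).Normal where
  conj_mem := by
    rintro _ ⟨x, hx, rfl⟩ k
    obtain ⟨hxH, hxN⟩ := mem_inf.mp hx
    obtain ⟨h, hh, rfl⟩ : k ∈ H.map f := hH ▸ mem_top k
    refine ⟨h * x * h⁻¹, mem_inf.mpr ⟨?_, hN.conj_mem x hxN h⟩, by simp only [map_mul, map_inv]⟩
    exact mul_mem (mul_mem hh hxH) (inv_mem hh)

end Subgroup

theorem IsSimpleGroup.center_eq_bot {K : Type*} [Group K] [IsSimpleGroup K]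
    (hK : ¬ ∀ x y : K, Commute x y) : Subgroup.center K = ⊥ :=
  (Subgroup.instNormalCenter (G := K)).eq_bot_or_eq_top.resolve_right fun htop => hK fun x y =>
    ((Subgroup.mem_center_iff.mp (htop ▸ Subgroup.mem_top x)) y).symm

section Overdiagonal

variable {ι : Type*} {K : ι → Type*} [∀ i, Group (K i)] {H : Subgroup (∀ i, K i)}

open Subgroup

theorem exists_mem_inf_pi_bot_apply_eq {S : Set ι} {j : ι} [IsSimpleGroup (K j)]
    (hZ : center (K j) = ⊥) (hj : H.map (Pi.evalMonoidHom K j) = ⊤)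
    {u : ∀ i, K i} (hu : u ∈ normalizer (H : Set (∀ i, K i))) (hS : ∀ i ∈ S, u i = 1) :
    ∃ x ∈ H ⊓ pi S (fun _ => ⊥), x j = u j := by
  rcases (normal_map_inf_of_map_eq_top (N := pi S fun _ => ⊥) _ hj).eq_bot_or_eq_top
    with hbot | htop
  · refine ⟨1, one_mem _, ?_⟩
    suffices u j ∈ center (K j) by rw [hZ, mem_bot] at this; exact this.symm
    refine mem_center_iff.mpr fun k => ?_
    obtain ⟨h, hh, rfl⟩ : k ∈ H.map (Pi.evalMonoidHom K j) := hj ▸ mem_top k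
    have hcomm : u * h * u⁻¹ * h⁻¹ ∈ H ⊓ pi S (fun _ => ⊥) := mem_inf.mpr
      ⟨mul_mem ((mem_normalizer_iff.mp hu h).mp hh) (inv_mem hh), fun i hi => by simp [hS i hi]⟩
    have hcommj : u j * h j * (u j)⁻¹ * (h j)⁻¹ = 1 := by
      simpa [hbot] using mem_map_of_mem (Pi.evalMonoidHom K j) hcomm
    rw [mul_inv_eq_one, mul_inv_eq_iff_eq_mul] at hcommj
    exact hcommj.symm
  · have : u j ∈ (H ⊓ pi S fun _ => ⊥).map (Pi.evalMonoidHom K j) := htop ▸ mem_top (u j)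
    obtain ⟨x, hx, hxj⟩ := this
    exact ⟨x, hx, hxj⟩

theorem exists_mem_eqOn_of_mem_normalizer [∀ j, IsSimpleGroup (K j)]
    (hZ : ∀ j, center (K j) = ⊥) (hover : ∀ j, H.map (Pi.evalMonoidHom K j) = ⊤)
    {g : ∀ i, K i} (hg : g ∈ normalizer (H : Set (∀ i, K i))) (S : Finset ι) :
    ∃ h ∈ H, ∀ i ∈ S, h i = g i := by
  classical
  induction S using Finset.induction_on with
  | empty => exact ⟨1, one_mem H, by simp⟩
  | insert j S _ ih =>
    obtain ⟨h, hh, hhg⟩ := ih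
    have hu : g * h⁻¹ ∈ normalizer (H : Set (∀ i, K i)) :=
      mul_mem hg (inv_mem (le_normalizer hh))
    obtain ⟨x, hx, hxj⟩ := exists_mem_inf_pi_bot_apply_eq (S := S) (hZ j) (hover j) hu
      fun i hi => by simp [hhg i hi]
    obtain ⟨hxH, hxS⟩ := mem_inf.mp hx
    refine ⟨x * h, mul_mem hxH hh, (Finset.forall_mem_insert _ _ _).mpr ⟨?_, fun i hi => ?_⟩⟩
    · simp [hxj]
    · simp [mem_bot.mp (hxS i hi), hhg i hi]

end Overdiagonal

theorem overdiagonal_self_normalizing_general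
    {n : ℕ} (K : Fin n → Type*) [∀ i, Group (K i)]
    [∀ i, IsSimpleGroup (K i)] (hna : ∀ i, ¬ ∀ x y : K i, Commute x y)
    (H : Subgroup (∀ i, K i))
    (hover : ∀ i, H.map (Pi.evalMonoidHom K i) = ⊤) :
    Subgroup.normalizer (H : Set (∀ i, K i)) = H := by
  refine le_antisymm (fun g hg => ?_) Subgroup.le_normalizer
  obtain ⟨h, hh, hhg⟩ := exists_mem_eqOn_of_mem_normalizer
    (fun i => IsSimpleGroup.center_eq_bot (hna i)) hover hg Finset.univ
  exact funext (fun i => hhg i (Finset.mem_univ i)) ▸ hh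

/-- Let `G = K₁ × ⋯ × K_n` be a direct product of nonabelian simple
groups with projections `π i`, and let `H` be an overdiagonal subgroup of `G`
(i.e. `π i (H) = K i` for every `i`).  Then `H` is self-normalizing: `N_G(H) = H`. -/
theorem overdiagonal_self_normalizing
    {n : ℕ} (K : Fin n → Type*) [∀ i, Group (K i)] [∀ i, Finite (K i)]
    [∀ i, IsSimpleGroup (K i)] (hna : ∀ i, ¬ ∀ x y : K i, Commute x y)
    (H : Subgroup (∀ i, K i))
    (hover : ∀ i, H.map (Pi.evalMonoidHom K i) = ⊤) :
    Subgroup.normalizer (H : Set (∀ i, K i)) = H :=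
  overdiagonal_self_normalizing_general K hna H hover
end
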